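/- arXiv:math/0411388 — 5 statements merged into one kernel-verified Lean document; each statement's English description precedes it below -/
import Mathlib

section
/- Let U be unitary on H, φ a unit vector, λ on the unit circle, and U_λ = U(1-P)+λUP with P the projection onto ℂφ. Then for every z in the open unit disk, (z - U_λ)⁻¹ U φ = [1 + (λ-1)⟨φ, (z - U_λ)⁻¹ U φ⟩] (z - U)⁻¹ U φ. -/
/-- Second-resolvent identity: `(z-U_λ)⁻¹Uφ = [1+(λ-1)⟨φ,(z-U_λ)⁻¹Uφ⟩](z-U)⁻¹Uφ`. -/
theorem resolvent_rankOne_identity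
    {H : Type*} [NormedAddCommGroup H] [InnerProductSpace ℂ H] [CompleteSpace H]
    (U : H →L[ℂ] H) (hU : U ∈ unitary (H →L[ℂ] H))
    (φ : H) (hφ : ‖φ‖ = 1) (lam : ℂ) (hlam : ‖lam‖ = 1)
    (Ulam : H →L[ℂ] H)
    (hUlam : Ulam = U * (1 - (innerSL ℂ φ).smulRight φ)
        + lam • (U * (innerSL ℂ φ).smulRight φ)) :
    ∀ z : ℂ, ‖z‖ < 1 →
      IsUnit (z • (1 : H →L[ℂ] H) - U) → IsUnit (z • (1 : H →L[ℂ] H) - Ulam) →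
      (Ring.inverse (z • (1 : H →L[ℂ] H) - Ulam)) (U φ)
        = (1 + (lam - 1) *
            (inner ℂ φ ((Ring.inverse (z • (1 : H →L[ℂ] H) - Ulam)) (U φ)) : ℂ)) •
          (Ring.inverse (z • (1 : H →L[ℂ] H) - U)) (U φ) := by
  intro z hz hA hB
  set A := z • (1 : H →L[ℂ] H) - U with hAdef
  set B := z • (1 : H →L[ℂ] H) - Ulam with hBdef
  have hdiff : A - B = (lam - 1) • (U * (innerSL ℂ φ).smulRight φ) := by
    rw [hAdef, hBdef, hUlam, mul_sub, mul_one]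
    module
  have op : Ring.inverse B = Ring.inverse A
      + Ring.inverse A * (A - B) * Ring.inverse B := by
    have h1 : Ring.inverse A * (A - B) * Ring.inverse B
        = Ring.inverse B - Ring.inverse A := by
      rw [mul_sub, Ring.inverse_mul_cancel _ hA, sub_mul, one_mul, mul_assoc,
        Ring.mul_inverse_cancel _ hB, mul_one]
    rw [h1, add_sub_cancel]
  have happ := congrArg (fun T : H →L[ℂ] H => T (U φ)) op
  simp only [ContinuousLinearMap.add_apply, ContinuousLinearMap.mul_apply,
    hdiff, ContinuousLinearMap.smul_apply, ContinuousLinearMap.smulRight_apply,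
    innerSL_apply_apply, map_smul] at happ
  set c : ℂ := (inner ℂ φ ((Ring.inverse B) (U φ)) : ℂ) with hc
  rw [happ, smul_smul, add_smul, one_smul]
end

section
/- Let U be unitary on H, φ a unit vector, λ on the unit circle, U_λ = U(1-P)+λUP. For every z in the open unit disk and every ψ ∈ H, the vector (U_λ - z)⁻¹ U_λ φ is a scalar multiple of (U - z)⁻¹ U φ; consequently if ⟨φ,(U_λ-z)⁻¹U_λφ⟩ ≠ 0 and ⟨φ,(U-z)⁻¹Uφ⟩ ≠ 0 then ⟨ψ,(U_λ-z)⁻¹U_λφ⟩ / ⟨φ,(U_λ-z)⁻¹U_λφ⟩ = ⟨ψ,(U-z)⁻¹Uφ⟩ / ⟨φ,(U-z)⁻¹Uφ⟩. -/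
/-- `(U_λ-z)⁻¹U_λφ` is a multiple of `(U-z)⁻¹Uφ`, and the consequent ratio identity. -/
theorem resolvent_rankOne_proportional
    {H : Type*} [NormedAddCommGroup H] [InnerProductSpace ℂ H] [CompleteSpace H]
    (U : H →L[ℂ] H) (hU : U ∈ unitary (H →L[ℂ] H))
    (φ : H) (hφ : ‖φ‖ = 1) (lam : ℂ) (hlam : ‖lam‖ = 1)
    (Ulam : H →L[ℂ] H)
    (hUlam : Ulam = U * (1 - (innerSL ℂ φ).smulRight φ)
        + lam • (U * (innerSL ℂ φ).smulRight φ))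
    (z : ℂ) (hz : ‖z‖ < 1)
    (h1 : IsUnit (U - z • (1 : H →L[ℂ] H))) (h2 : IsUnit (Ulam - z • (1 : H →L[ℂ] H))) :
    (∃ c : ℂ, (Ring.inverse (Ulam - z • (1 : H →L[ℂ] H))) (Ulam φ)
        = c • (Ring.inverse (U - z • (1 : H →L[ℂ] H))) (U φ)) ∧
    (∀ ψ : H,
      (inner ℂ φ ((Ring.inverse (Ulam - z • (1 : H →L[ℂ] H))) (Ulam φ)) : ℂ) ≠ 0 →
      (inner ℂ φ ((Ring.inverse (U - z • (1 : H →L[ℂ] H))) (U φ)) : ℂ) ≠ 0 →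
      (inner ℂ ψ ((Ring.inverse (Ulam - z • (1 : H →L[ℂ] H))) (Ulam φ)) : ℂ) /
        (inner ℂ φ ((Ring.inverse (Ulam - z • (1 : H →L[ℂ] H))) (Ulam φ)) : ℂ)
      = (inner ℂ ψ ((Ring.inverse (U - z • (1 : H →L[ℂ] H))) (U φ)) : ℂ) /
        (inner ℂ φ ((Ring.inverse (U - z • (1 : H →L[ℂ] H))) (U φ)) : ℂ)) := by
  set A := U - z • (1 : H →L[ℂ] H) with hA
  set B := Ulam - z • (1 : H →L[ℂ] H) with hB
  set v := (Ring.inverse B) (Ulam φ) with hv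
  set w := (Ring.inverse A) (U φ) with hw
  have hφφ : (inner ℂ φ φ : ℂ) = 1 := by
    rw [inner_self_eq_norm_sq_to_K, hφ]; norm_num
  have hPφ : ((innerSL ℂ φ).smulRight φ) φ = φ := by
    simp [ContinuousLinearMap.smulRight_apply, hφφ, hφ]
  have hUlamφ : Ulam φ = lam • U φ := by
    simp [hUlam, ContinuousLinearMap.add_apply, ContinuousLinearMap.mul_apply,
      ContinuousLinearMap.sub_apply, ContinuousLinearMap.one_apply, hPφ,
      ContinuousLinearMap.smul_apply]
  have hBv : B v = lam • U φ := by
    have h' : B v = Ulam φ := by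
      have := congrArg (fun T : H →L[ℂ] H => T (Ulam φ)) (Ring.mul_inverse_cancel B h2)
      simpa [ContinuousLinearMap.mul_apply] using this
    rw [h', hUlamφ]
  have hdiff : B v - A v = ((lam - 1) * (inner ℂ φ v : ℂ)) • U φ := by
    have h0 : B v - A v = Ulam v - U v := by
      simp [hA, hB, ContinuousLinearMap.sub_apply, ContinuousLinearMap.smul_apply]
    rw [h0, hUlam]
    simp [ContinuousLinearMap.add_apply, ContinuousLinearMap.mul_apply,
      ContinuousLinearMap.sub_apply, ContinuousLinearMap.one_apply,
      ContinuousLinearMap.smul_apply, ContinuousLinearMap.smulRight_apply,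
      map_sub, map_smul, smul_smul, sub_mul, one_mul]
    module
  set c : ℂ := lam - (lam - 1) * (inner ℂ φ v : ℂ) with hc
  have hAv : A v = c • U φ := by
    have : A v = B v - (B v - A v) := by abel
    rw [this, hdiff, hBv, hc, sub_smul]
  have hkey : v = c • w := by
    have h := Ring.inverse_mul_cancel B h2
    have h' := Ring.inverse_mul_cancel A h1
    have hv' : v = (Ring.inverse A) (A v) := by
      have := congrArg (fun T : H →L[ℂ] H => T v) h'
      simpa [ContinuousLinearMap.mul_apply] using this.symm
    rw [hv', hAv, map_smul, hw]
  refine ⟨⟨c, hkey⟩, ?_⟩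
  intro ψ hne1 hne2
  have hφv : (inner ℂ φ v : ℂ) = c * inner ℂ φ w := by
    rw [hkey, inner_smul_right]
  have hψv : (inner ℂ ψ v : ℂ) = c * inner ℂ ψ w := by
    rw [hkey, inner_smul_right]
  have hcne : c ≠ 0 := by
    intro h0
    apply hne1
    rw [hφv, h0, zero_mul]
  rw [hφv, hψv, mul_div_mul_left _ _ hcne]
end

section
/- Let U be unitary on H, φ a unit vector, and define f on the unit disk by the relation F(z) = (1+z f(z))/(1-z f(z)) where F(z) = ⟨φ,(U+z)(U-z)⁻¹φ⟩. Let U_λ = U(1-P)+λUP for |λ|=1. Then the Carathéodory function of (U_λ, φ) equals F_λ(z) = (1 + λ⁻¹ z f(z))/(1 - λ⁻¹ z f(z)). -/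
set_option maxHeartbeats 1000000

open ComplexConjugate

/-- If `F(z) = (1+zf(z))/(1-zf(z))` is the Carathéodory function of `(U,φ)`, then the
Carathéodory function of `(U_λ,φ)` is `(1+λ⁻¹zf(z))/(1-λ⁻¹zf(z))`. -/
theorem caratheodory_rankOne_schur
    {H : Type*} [NormedAddCommGroup H] [InnerProductSpace ℂ H] [CompleteSpace H]
    (U : H →L[ℂ] H) (hU : U ∈ unitary (H →L[ℂ] H))
    (φ : H) (hφ : ‖φ‖ = 1) (lam : ℂ) (hlam : ‖lam‖ = 1)
    (Ulam : H →L[ℂ] H)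
    (hUlam : Ulam = U * (1 - (innerSL ℂ φ).smulRight φ)
        + lam • (U * (innerSL ℂ φ).smulRight φ))
    (hinv : ∀ z : ℂ, ‖z‖ < 1 → IsUnit (U - z • (1 : H →L[ℂ] H)))
    (hinvlam : ∀ z : ℂ, ‖z‖ < 1 → IsUnit (Ulam - z • (1 : H →L[ℂ] H)))
    (f : ℂ → ℂ)
    (hf : ∀ z : ℂ, ‖z‖ < 1 →
      (inner ℂ φ (((U + z • (1 : H →L[ℂ] H)) * Ring.inverse (U - z • (1 : H →L[ℂ] H))) φ) : ℂ)
        = (1 + z * f z) / (1 - z * f z)) :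
    ∀ z : ℂ, ‖z‖ < 1 →
      (inner ℂ φ (((Ulam + z • (1 : H →L[ℂ] H)) *
          Ring.inverse (Ulam - z • (1 : H →L[ℂ] H))) φ) : ℂ)
        = (1 + lam⁻¹ * z * f z) / (1 - lam⁻¹ * z * f z) := by
  intro z hz
  have hlam0 : lam ≠ 0 := by
    intro h; rw [h, norm_zero] at hlam; norm_num at hlam
  set A : H →L[ℂ] H := U - z • 1 with hAdef
  set B : H →L[ℂ] H := Ulam - z • 1 with hBdef
  have hA := hinv z hz
  have hB := hinvlam z hz
  have hAinv : ∀ x : H, A (Ring.inverse A x) = x := by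
    intro x
    rw [← ContinuousLinearMap.mul_apply, Ring.mul_inverse_cancel _ hA,
      ContinuousLinearMap.one_apply]
  have hBinv : ∀ x : H, Ring.inverse B (B x) = x := by
    intro x
    rw [← ContinuousLinearMap.mul_apply, Ring.inverse_mul_cancel _ hB,
      ContinuousLinearMap.one_apply]
  set g : H := Ring.inverse A φ with hgdef
  have hAg : A g = φ := hAinv φ
  have hφφ : (inner ℂ φ φ : ℂ) = 1 := by
    rw [inner_self_eq_norm_sq_to_K, hφ]; norm_num
  have hφ0 : φ ≠ 0 := by
    intro h; rw [h, norm_zero] at hφ; norm_num at hφ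
  -- U preserves inner products
  have hUnorm : ∀ x y : H, (inner ℂ (U x) (U y) : ℂ) = inner ℂ x y := by
    intro x y
    have h1 : star U * U = 1 := hU.1
    rw [← ContinuousLinearMap.adjoint_inner_left]
    congr 1
    calc (ContinuousLinearMap.adjoint U) (U x) = (star U * U) x := by
          rw [ContinuousLinearMap.star_eq_adjoint, ContinuousLinearMap.mul_apply]
      _ = x := by rw [h1, ContinuousLinearMap.one_apply]
  have hUφ0 : U φ ≠ 0 := by
    intro h
    have := hUnorm φ φ
    rw [h, inner_zero_left, hφφ] at this
    exact one_ne_zero this.symm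
  set m : ℂ := inner ℂ φ g with hmdef
  -- apply formulas
  have hAapp : ∀ x : H, A x = U x - z • x := by
    intro x
    simp [hAdef, ContinuousLinearMap.sub_apply, ContinuousLinearMap.smul_apply,
      ContinuousLinearMap.one_apply]
  have hUlamApp : ∀ x : H, Ulam x = U x + ((lam - 1) * (inner ℂ φ x : ℂ)) • U φ := by
    intro x
    rw [hUlam]
    simp only [ContinuousLinearMap.add_apply, ContinuousLinearMap.mul_apply,
      ContinuousLinearMap.smul_apply, ContinuousLinearMap.sub_apply,
      ContinuousLinearMap.one_apply, ContinuousLinearMap.smulRight_apply, innerSL_apply_apply,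
      map_sub, map_smul]
    module
  have hBapp : ∀ x : H, B x = A x + ((lam - 1) * (inner ℂ φ x : ℂ)) • U φ := by
    intro x
    simp only [hBdef, hAdef, ContinuousLinearMap.sub_apply, ContinuousLinearMap.smul_apply,
      ContinuousLinearMap.one_apply, hUlamApp]
    module
  -- Caratheodory function of U: 1 + 2 z m
  have hF : (inner ℂ φ (((U + z • (1 : H →L[ℂ] H)) * Ring.inverse A) φ) : ℂ) = 1 + 2 * z * m := by
    have h1 : ((U + z • (1 : H →L[ℂ] H)) * Ring.inverse A) φ = φ + (2 * z) • g := by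
      rw [ContinuousLinearMap.mul_apply]
      have : (U + z • (1 : H →L[ℂ] H)) = A + (2 * z) • 1 := by
        rw [hAdef]; module
      rw [this, ContinuousLinearMap.add_apply]
      simp only [ContinuousLinearMap.smul_apply, ContinuousLinearMap.one_apply]
      rw [show A ((Ring.inverse A) φ) = φ from hAinv φ]
    rw [h1, inner_add_right, inner_smul_right, hφφ, hmdef]
    all_goals ring
  have hf' : 1 + 2 * z * m = (1 + z * f z) / (1 - z * f z) := by
    rw [← hF]; exact hf z hz
  -- g ≠ 0
  have hg0 : g ≠ 0 := by
    intro h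
    apply hφ0
    rw [← hAg, h, map_zero]
  -- h := φ + z • g satisfies A h = U φ
  set hv : H := φ + z • g with hhdef
  have hAh : A hv = U φ := by
    rw [hhdef, map_add, map_smul, hAg, hAapp φ]
    module
  have hφh : (inner ℂ φ hv : ℂ) = 1 + z * m := by
    rw [hhdef, inner_add_right, inner_smul_right, hφφ, hmdef]
  set d : ℂ := 1 + (lam - 1) * (1 + z * m) with hddef
  have hBh : B hv = d • U φ := by
    rw [hBapp, hAh, hφh, hddef, add_smul, one_smul]
  have hd0 : d ≠ 0 := by
    intro h0
    have h1 : B hv = 0 := by rw [hBh, h0, zero_smul]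
    have h2 : hv = 0 := by
      have := hBinv hv
      rw [h1, map_zero] at this
      exact this.symm
    apply hUφ0
    rw [← hAh, h2, map_zero]
  have hBg : B g = φ + ((lam - 1) * m) • U φ := by
    rw [hBapp, hAg, hmdef]
  set c : ℂ := (lam - 1) * m / d with hcdef
  have hBG : B (g - c • hv) = φ := by
    rw [map_sub, map_smul, hBg, hBh, smul_smul, hcdef, div_mul_cancel₀ _ hd0]
    module
  have hG : Ring.inverse B φ = g - c • hv := by
    rw [← hBG, hBinv]
  -- Caratheodory function of Ulam
  have hFlam : (inner ℂ φ (((Ulam + z • (1 : H →L[ℂ] H)) * Ring.inverse B) φ) : ℂ)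
      = 1 + 2 * z * (m - c * (1 + z * m)) := by
    have h1 : ((Ulam + z • (1 : H →L[ℂ] H)) * Ring.inverse B) φ
        = φ + (2 * z) • (g - c • hv) := by
      rw [ContinuousLinearMap.mul_apply]
      have h2 : (Ulam + z • (1 : H →L[ℂ] H)) = B + (2 * z) • 1 := by
        rw [hBdef]; module
      rw [h2, ContinuousLinearMap.add_apply, hG, hBG, ContinuousLinearMap.smul_apply,
        ContinuousLinearMap.one_apply]
    rw [h1, inner_add_right, inner_smul_right, hφφ, inner_sub_right, inner_smul_right,
      ← hmdef, hφh]
    all_goals ring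
  rw [hFlam]
  clear_value A B g hv m d c
  -- now pure algebra
  set w : ℂ := z * f z with hwdef
  have hgw : lam⁻¹ * z * f z = lam⁻¹ * w := by rw [hwdef]; ring
  rw [hgw]
  by_cases hw1 : 1 - w = 0
  · -- degenerate case: would force Re F = 0, contradiction
    exfalso
    have hF0 : 1 + 2 * z * m = 0 := by
      rw [hf', hw1, div_zero]
    -- inner product identities
    set a : ℂ := inner ℂ (U g) g with hadef
    set t : ℂ := inner ℂ g g with htdef
    have hφg : φ = U g - z • g := by rw [← hAg, hAapp]
    have hm : m = a - conj z * t := by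
      rw [hmdef, hφg, inner_sub_left, inner_smul_left, hadef, htdef]
    have ht : conj t = t := by rw [htdef, inner_conj_symm]
    have hgU : (inner ℂ g (U g) : ℂ) = conj a := by rw [hadef, ← inner_conj_symm]
    have e3 : (1 : ℂ) = t + z * conj z * t - z * a - conj z * conj a := by
      have : (inner ℂ φ φ : ℂ) = inner ℂ (U g - z • g) ((U g) - z • g) := by rw [← hφg]
      rw [hφφ, inner_sub_left, inner_sub_right, inner_sub_right, inner_smul_left,
        inner_smul_right, inner_smul_left, inner_smul_right, hUnorm, ← htdef, ← hadef,
        hgU] at this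
      rw [this]; ring
    clear_value a t
    have e1 : (1 : ℂ) + 2 * z * (a - conj z * t) = 0 := by rw [← hm]; exact hF0
    have e2 : (1 : ℂ) + 2 * conj z * (conj a - z * t) = 0 := by
      have := congrArg (conj ·) e1
      simp only [map_add, map_mul, map_sub, map_one, map_ofNat, map_zero,
        Complex.conj_conj, ht] at this
      linear_combination this
    have key : t * (1 - z * conj z) = 0 := by linear_combination e1 / 2 + e2 / 2 - e3
    have hzz : z * conj z = ((‖z‖ : ℂ)) ^ 2 := by
      rw [Complex.mul_conj]
      norm_cast
      rw [Complex.normSq_eq_norm_sq]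
    have htval : t = ((‖g‖ : ℂ)) ^ 2 := by
      rw [htdef]; exact_mod_cast inner_self_eq_norm_sq_to_K g
    rw [htval, hzz] at key
    have keyR : ‖g‖ ^ 2 * (1 - ‖z‖ ^ 2) = 0 := by exact_mod_cast key
    have hgn : 0 < ‖g‖ := norm_pos_iff.mpr hg0
    have hz2 : ‖z‖ ^ 2 < 1 := by nlinarith [norm_nonneg z]
    nlinarith [pow_pos hgn 2]
  · -- main case
    have e : (1 + 2 * z * m) * (1 - w) = 1 + w := by
      rw [hf', div_mul_cancel₀ _ hw1]
    have h1zm : 1 + z * m ≠ 0 := by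
      intro h0
      have : (2 : ℂ) = 0 := by linear_combination (2 - 2 * w) * h0 - e
      norm_num at this
    have hw_eq : w * (1 + z * m) = z * m := by linear_combination -(1/2 : ℂ) * e
    have hli : lam * lam⁻¹ = 1 := mul_inv_cancel₀ hlam0
    have hlamw : (1 - lam⁻¹ * w) * (lam * (1 + z * m)) = d := by
      rw [hddef]
      linear_combination (-(w * (1 + z * m))) * hli - hw_eq
    have hne : 1 - lam⁻¹ * w ≠ 0 := by
      intro h0
      rw [h0, zero_mul] at hlamw
      exact hd0 hlamw.symm
    have hcd : c * d = (lam - 1) * m := by rw [hcdef]; exact div_mul_cancel₀ _ hd0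
    have hL : 1 + 2 * z * (m - c * (1 + z * m)) = (d + 2 * z * m) / d := by
      rw [eq_div_iff hd0]
      linear_combination (-(2 * z) * (1 + z * m)) * hcd + (2 * z * m) * hddef
    have hR : (1 + lam⁻¹ * w) / (1 - lam⁻¹ * w) = (d + 2 * z * m) / d := by
      rw [div_eq_div_iff hne hd0, hddef]
      linear_combination (2 * z * m) * hli + (2 * lam * lam⁻¹) * hw_eq
    rw [hL]
    exact hR.symm
end

section
/- Let U be unitary on H, φ a unit vector, λ on the unit circle, U_λ = U(1-P)+λUP, and f the Schur function of (U,φ). If ψ ⊥ φ, then for every z in the open unit disk, ⟨ψ, (U_λ+z)(U_λ-z)⁻¹ φ⟩ = [(1 - z f(z))/(1 - λ⁻¹ z f(z))] · ⟨ψ, (U+z)(U-z)⁻¹ φ⟩. -/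
private lemma aux_alg (z F lam a c A B : ℂ) (hlam : lam ≠ 0)
    (hD : 1 - z * F ≠ 0)
    (h1 : B = A - (lam - 1) * c * (z * A))
    (h2 : c = a - (lam - 1) * c * (1 + z * a))
    (h3 : 1 + 2 * z * a = (1 + z * F) / (1 - z * F)) :
    2 * z * B = (1 - z * F) / (1 - lam⁻¹ * z * F) * (2 * z * A) := by
  have hli : lam * lam⁻¹ = 1 := mul_inv_cancel₀ hlam
  have hza : z * a * (1 - z * F) = z * F := by
    have h3' : (1 + 2 * z * a) * (1 - z * F) = 1 + z * F := by
      rw [h3]; field_simp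
    linear_combination h3' / 2
  have hzc : z * c * (lam - z * F) = z * F := by
    linear_combination (z * (1 - z * F)) * h2 + (1 - (lam - 1) * z * c) * hza
  have hlz : lam - z * F ≠ 0 := by
    intro h
    rw [h, mul_zero] at hzc
    apply hlam
    linear_combination h - hzc
  have hfac : lam - z * F = lam * (1 - lam⁻¹ * z * F) := by
    field_simp
  have hne : 1 - lam⁻¹ * z * F ≠ 0 := by
    intro h
    apply hlz
    rw [hfac, h, mul_zero]
  rw [div_mul_eq_mul_div, eq_div_iff hne]
  apply mul_left_cancel₀ hlam
  have key : 2 * z * B * (lam - z * F) = (1 - z * F) * (2 * z * A) * lam := by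
    linear_combination (2 * z * (lam - z * F)) * h1 - (2 * (lam - 1) * z * A) * hzc
  linear_combination key - 2 * z * B * (z * F) * hli

set_option maxHeartbeats 1000000

/-- For `ψ ⊥ φ`:
`⟨ψ,(U_λ+z)(U_λ-z)⁻¹φ⟩ = [(1-zf(z))/(1-λ⁻¹zf(z))]⟨ψ,(U+z)(U-z)⁻¹φ⟩`. -/
theorem offdiagonal_caratheodory_rankOne
    {H : Type*} [NormedAddCommGroup H] [InnerProductSpace ℂ H] [CompleteSpace H]
    (U : H →L[ℂ] H) (hU : U ∈ unitary (H →L[ℂ] H))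
    (φ ψ : H) (hφ : ‖φ‖ = 1) (horth : (inner ℂ ψ φ : ℂ) = 0)
    (lam : ℂ) (hlam : ‖lam‖ = 1)
    (Ulam : H →L[ℂ] H)
    (hUlam : Ulam = U * (1 - (innerSL ℂ φ).smulRight φ)
        + lam • (U * (innerSL ℂ φ).smulRight φ))
    (hinv : ∀ z : ℂ, ‖z‖ < 1 → IsUnit (U - z • (1 : H →L[ℂ] H)))
    (hinvlam : ∀ z : ℂ, ‖z‖ < 1 → IsUnit (Ulam - z • (1 : H →L[ℂ] H)))
    (f : ℂ → ℂ)
    (hf : ∀ z : ℂ, ‖z‖ < 1 →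
      (inner ℂ φ (((U + z • (1 : H →L[ℂ] H)) * Ring.inverse (U - z • (1 : H →L[ℂ] H))) φ) : ℂ)
        = (1 + z * f z) / (1 - z * f z)) :
    ∀ z : ℂ, ‖z‖ < 1 →
      (inner ℂ ψ (((Ulam + z • (1 : H →L[ℂ] H)) *
          Ring.inverse (Ulam - z • (1 : H →L[ℂ] H))) φ) : ℂ)
        = ((1 - z * f z) / (1 - lam⁻¹ * z * f z)) *
          (inner ℂ ψ (((U + z • (1 : H →L[ℂ] H)) *
            Ring.inverse (U - z • (1 : H →L[ℂ] H))) φ) : ℂ) := by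
  intro z hz
  set R : H →L[ℂ] H := Ring.inverse (U - z • (1 : H →L[ℂ] H)) with hRdef
  set Rl : H →L[ℂ] H := Ring.inverse (Ulam - z • (1 : H →L[ℂ] H)) with hRldef
  have hR1 : (U - z • (1 : H →L[ℂ] H)) * R = 1 := Ring.mul_inverse_cancel _ (hinv z hz)
  have hR2 : R * (U - z • (1 : H →L[ℂ] H)) = 1 := Ring.inverse_mul_cancel _ (hinv z hz)
  have hRl1 : (Ulam - z • (1 : H →L[ℂ] H)) * Rl = 1 := Ring.mul_inverse_cancel _ (hinvlam z hz)
  have hRl2 : Rl * (Ulam - z • (1 : H →L[ℂ] H)) = 1 := Ring.inverse_mul_cancel _ (hinvlam z hz)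
  set g : H := R φ with hgdef
  set gl : H := Rl φ with hgldef
  -- basic action identities
  have hg : U g - z • g = φ := by
    have h := DFunLike.congr_fun hR1 φ
    simpa [ContinuousLinearMap.mul_apply, ContinuousLinearMap.sub_apply,
      ContinuousLinearMap.smul_apply] using h
  have hUlapp : ∀ x : H, Ulam x = U x + (lam - 1) • ((inner ℂ φ x : ℂ) • U φ) := by
    intro x
    rw [hUlam]
    simp only [ContinuousLinearMap.add_apply, ContinuousLinearMap.mul_apply,
      ContinuousLinearMap.sub_apply, ContinuousLinearMap.smul_apply,
      ContinuousLinearMap.one_apply, ContinuousLinearMap.smulRight_apply,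
      innerSL_apply_apply, map_sub, map_smul]
    module
  have hgl : (U gl - z • gl) + ((lam - 1) * (inner ℂ φ gl : ℂ)) • U φ = φ := by
    have h := DFunLike.congr_fun hRl1 φ
    simp only [ContinuousLinearMap.mul_apply, ContinuousLinearMap.sub_apply,
      ContinuousLinearMap.smul_apply, ContinuousLinearMap.one_apply] at h
    rw [hUlapp gl] at h
    have h' : U gl + (lam - 1) • (inner ℂ φ gl : ℂ) • U φ - z • gl = φ := h
    refine Eq.trans ?_ h'
    rw [mul_smul]
    abel
  have hRU : R (U φ) = φ + z • g := by
    have h := DFunLike.congr_fun hR2 φ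
    simp only [ContinuousLinearMap.mul_apply, ContinuousLinearMap.sub_apply,
      ContinuousLinearMap.smul_apply, ContinuousLinearMap.one_apply, map_sub, map_smul] at h
    rw [hgdef]
    exact sub_eq_iff_eq_add.mp h
  -- key vector identity
  have hkey : gl = g - ((lam - 1) * (inner ℂ φ gl : ℂ)) • (φ + z • g) := by
    have h := congrArg R hgl
    simp only [map_add, map_sub, map_smul, hRU] at h
    -- R (U gl - z • gl) = (R * (U - z•1)) gl = gl
    have h2 : R (U gl) - z • R gl = gl := by
      have := DFunLike.congr_fun hR2 gl
      simpa [ContinuousLinearMap.mul_apply, ContinuousLinearMap.sub_apply,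
        ContinuousLinearMap.smul_apply, map_sub, map_smul] using this
    rw [h2] at h
    rw [← hgdef] at h
    exact eq_sub_of_add_eq h
  set a : ℂ := (inner ℂ φ g : ℂ) with hadef
  set c : ℂ := (inner ℂ φ gl : ℂ) with hcdef
  set A : ℂ := (inner ℂ ψ g : ℂ) with hAdef
  set B : ℂ := (inner ℂ ψ gl : ℂ) with hBdef
  have hφφ : (inner ℂ φ φ : ℂ) = 1 := by
    rw [inner_self_eq_norm_sq_to_K, hφ]; norm_num
  have h1 : B = A - (lam - 1) * c * (z * A) := by
    have h := congrArg (fun x => (inner ℂ ψ x : ℂ)) hkey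
    simp only [inner_sub_right, inner_add_right, inner_smul_right, horth] at h
    rw [← hAdef, ← hBdef] at h
    linear_combination h
  have h2 : c = a - (lam - 1) * c * (1 + z * a) := by
    have h := congrArg (fun x => (inner ℂ φ x : ℂ)) hkey
    simp only [inner_sub_right, inner_add_right, inner_smul_right, hφφ] at h
    rw [← hadef] at h
    linear_combination h
  -- Caratheodory expansions
  have hop : (U + z • (1 : H →L[ℂ] H)) * R = 1 + (2 * z) • R := by
    have : U + z • (1 : H →L[ℂ] H)
        = (U - z • (1 : H →L[ℂ] H)) + (2 * z) • (1 : H →L[ℂ] H) := by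
      rw [two_mul, add_smul]; abel
    rw [this, add_mul, hR1, smul_mul_assoc, one_mul]
  have hopl : (Ulam + z • (1 : H →L[ℂ] H)) * Rl = 1 + (2 * z) • Rl := by
    have : Ulam + z • (1 : H →L[ℂ] H)
        = (Ulam - z • (1 : H →L[ℂ] H)) + (2 * z) • (1 : H →L[ℂ] H) := by
      rw [two_mul, add_smul]; abel
    rw [this, add_mul, hRl1, smul_mul_assoc, one_mul]
  have hcara : (inner ℂ φ (((U + z • (1 : H →L[ℂ] H)) * R) φ) : ℂ) = 1 + 2 * z * a := by
    rw [hop]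
    simp [ContinuousLinearMap.add_apply, ContinuousLinearMap.smul_apply,
      inner_add_right, inner_smul_right, hφφ, hφ, ← hgdef, ← hadef, mul_assoc]
  have hpsi : (inner ℂ ψ (((U + z • (1 : H →L[ℂ] H)) * R) φ) : ℂ) = 2 * z * A := by
    rw [hop]
    simp [ContinuousLinearMap.add_apply, ContinuousLinearMap.smul_apply,
      inner_add_right, inner_smul_right, horth, ← hgdef, ← hAdef, mul_assoc]
  have hpsil : (inner ℂ ψ (((Ulam + z • (1 : H →L[ℂ] H)) * Rl) φ) : ℂ) = 2 * z * B := by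
    rw [hopl]
    simp [ContinuousLinearMap.add_apply, ContinuousLinearMap.smul_apply,
      inner_add_right, inner_smul_right, horth, ← hgldef, ← hBdef, mul_assoc]
  have h3 : 1 + 2 * z * a = (1 + z * f z) / (1 - z * f z) := by
    rw [← hcara]; exact hf z hz
  -- nonvanishing of 1 - z f z  via positivity of the real part
  have hgne : g ≠ 0 := by
    intro h0
    rw [h0] at hg
    simp at hg
    rw [← hg] at hφ
    simp at hφ
  have hUU : (inner ℂ (U g) (U g) : ℂ) = inner ℂ g g := by
    have hs : star U * U = 1 := (Unitary.mem_iff.mp hU).1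
    have had : (ContinuousLinearMap.adjoint U) (U g) = g := by
      rw [← ContinuousLinearMap.star_eq_adjoint]
      have := DFunLike.congr_fun hs g
      simpa [ContinuousLinearMap.mul_apply] using this
    calc (inner ℂ (U g) (U g) : ℂ)
        = inner ℂ ((ContinuousLinearMap.adjoint U) (U g)) g :=
          (ContinuousLinearMap.adjoint_inner_left U g (U g)).symm
      _ = inner ℂ g g := by rw [had]
  have hD : 1 - z * f z ≠ 0 := by
    intro hD0
    have hfz := hf z hz
    rw [hD0, div_zero] at hfz
    have happ : (((U + z • (1 : H →L[ℂ] H)) * R) φ) = U g + z • g := by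
      simp only [ContinuousLinearMap.mul_apply, ContinuousLinearMap.add_apply,
        ContinuousLinearMap.smul_apply, ContinuousLinearMap.one_apply, ← hgdef]
    rw [happ] at hfz
    rw [← hg] at hfz
    have hgg : (inner ℂ g g : ℂ) = (((‖g‖ ^ 2 : ℝ)) : ℂ) := by
      exact_mod_cast inner_self_eq_norm_sq_to_K (𝕜 := ℂ) g
    simp only [inner_sub_left, inner_add_right, inner_smul_left, inner_smul_right, hUU,
      hgg] at hfz
    set t : ℂ := (inner ℂ (U g) g : ℂ) with htdef
    have hconj : (inner ℂ g (U g) : ℂ) = (starRingEnd ℂ) t := by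
      rw [htdef, ← inner_conj_symm]
    rw [hconj] at hfz
    have hx : (((‖g‖ ^ 2 : ℝ)) : ℂ) + z * t - ((starRingEnd ℂ) z * (starRingEnd ℂ) t
        + (starRingEnd ℂ) z * (z * (((‖g‖ ^ 2 : ℝ)) : ℂ))) = 0 := by
      linear_combination hfz
    have hre := congrArg Complex.re hx
    simp only [Complex.add_re, Complex.sub_re, Complex.mul_re, Complex.mul_im,
      Complex.conj_re, Complex.conj_im, Complex.ofReal_re, Complex.ofReal_im,
      Complex.zero_re] at hre
    have hzn : z.re * z.re + z.im * z.im < 1 := by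
      have h1 : Complex.normSq z < 1 := by
        rw [Complex.normSq_eq_norm_sq]
        nlinarith [hz, norm_nonneg z]
      simpa [Complex.normSq_apply] using h1
    have hgp : (0:ℝ) < ‖g‖ ^ 2 := pow_pos (norm_pos_iff.mpr hgne) 2
    nlinarith [hre, hzn, hgp, mul_pos hgp (by linarith : (0:ℝ) < 1 - (z.re * z.re + z.im * z.im))]
  have := aux_alg z (f z) lam a c A B (by
      intro h0; rw [h0] at hlam; simp at hlam) hD h1 h2 h3
  rw [hpsil, hpsi]
  exact this
end

section
/- Let 𝒞(α) = ℒ(α)ℳ(α) be the CMV matrix of Verblunsky coefficients α = (α₀,α₁,…) ∈ 𝔻^∞, where ℒ(α) = Θ(α₀)⊕Θ(α₂)⊕… and ℳ(α) = 1₁⊕Θ(α₁)⊕Θ(α₃)⊕…. For |λ|=1 and n ≥ 0 let T_{n,λ}(α)_j = α_j for j < n and λα_j for j ≥ n. Define the diagonal unitaries U_{2k-1} = D(1^{2k}(1λ)^∞) and U_{2k} = D(λ^{2k}(1λ)^∞), and Δ_n(λ) = D(1ⁿ λ 1^∞). Then U_n 𝒞(T_{n,λ⁻¹}(α)) U_n⁻¹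 = 𝒞(α) Δ_n(λ). -/
/-- `ρ(α) = √(1-|α|²)` as a complex number. -/
noncomputable def cmvRho (a : ℂ) : ℂ := (Real.sqrt (1 - ‖a‖ ^ 2) : ℝ)

/-- The operator `ℒ(α) = Θ(α₀) ⊕ Θ(α₂) ⊕ ⋯` acting on sequences. -/
noncomputable def cmvL (α : ℕ → ℂ) (x : ℕ → ℂ) : ℕ → ℂ := fun j =>
  if j % 2 = 0 then starRingEnd ℂ (α j) * x j + cmvRho (α j) * x (j + 1)
  else cmvRho (α (j - 1)) * x (j - 1) - α (j - 1) * x j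

/-- The operator `ℳ(α) = 1₁ ⊕ Θ(α₁) ⊕ Θ(α₃) ⊕ ⋯` acting on sequences. -/
noncomputable def cmvM (α : ℕ → ℂ) (x : ℕ → ℂ) : ℕ → ℂ := fun j =>
  if j = 0 then x 0
  else if j % 2 = 1 then starRingEnd ℂ (α j) * x j + cmvRho (α j) * x (j + 1)
  else cmvRho (α (j - 1)) * x (j - 1) - α (j - 1) * x j

/-- The CMV operator `𝒞(α) = ℒ(α)ℳ(α)`. -/
noncomputable def cmv (α : ℕ → ℂ) (x : ℕ → ℂ) : ℕ → ℂ := cmvL α (cmvM α x)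

/-- `T_{n,λ}(α)_j = α_j` for `j < n` and `λ α_j` for `j ≥ n`. -/
def cmvT (n : ℕ) (l : ℂ) (α : ℕ → ℂ) : ℕ → ℂ := fun j => if j < n then α j else l * α j

/-- The diagonal of the unitary `U_n`: `U_{2k-1} = D(1^{2k}(1λ)^∞)`,
`U_{2k} = D(λ^{2k}(1λ)^∞)`. -/
def cmvUdiag (n : ℕ) (l : ℂ) : ℕ → ℂ := fun j =>
  if n % 2 = 0 then (if j < n ∨ j % 2 = 1 then l else 1)
  else (if n < j ∧ j % 2 = 1 then l else 1)

/-- The diagonal of `Δ_n(λ) = D(1ⁿ λ 1^∞)`. -/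
def cmvDelta (n : ℕ) (l : ℂ) : ℕ → ℂ := fun j => if j = n then l else 1

/-!
Multiplying a Verblunsky coefficient by a unimodular `c` is undone by diagonal gauges: if
`d₀ = c d₁`, then `D(d₀, d₁) Θ(cα) = Θ(α) D(d₁, d₀)`, because `d₀ c̄ = d₁`, `d₁ c = d₀` and
`ρ(cα) = ρ(α)`. Write `T_{n,λ⁻¹}(α) = cα` with `c_j = 1` for `j < n` and `c_j = λ⁻¹` otherwise.
On the blocks of `ℒ` the diagonal `U_n` satisfies `d_{2k} = c_{2k} d_{2k+1}`, so
`U_n ℒ(cα) = ℒ(α) W_n`, where `W_n` is `U_n` with the entries of each pair `(2k, 2k+1)`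
interchanged. Since `ℳ(α) = 1 ⊕ ℒ(α₁, α₂, …)`, the same argument on the blocks of `ℳ` with the
diagonal `W_n` gives `W_n ℳ(cα) = ℳ(α) Δ_n U_n`.
-/

open ComplexConjugate

lemma cmvRho_mul_of_norm_eq_one {c : ℂ} (hc : ‖c‖ = 1) (a : ℂ) :
    cmvRho (c * a) = cmvRho a := by
  simp [cmvRho, hc]

lemma mul_cmvL_eq_cmvL_mul (α c d e y : ℕ → ℂ) (hc : ∀ j, ‖c j‖ = 1)
    (hd : ∀ j, j % 2 = 0 → d j = c j * d (j + 1))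
    (he : ∀ j, j % 2 = 0 → e j = d (j + 1) ∧ e (j + 1) = d j) (j : ℕ) :
    d j * cmvL (fun i => c i * α i) y j = cmvL α (fun i => e i * y i) j := by
  obtain ⟨k, rfl | rfl⟩ := Nat.even_or_odd' j
  · obtain ⟨he₀, he₁⟩ := he (2 * k) (by omega)
    have hconj : d (2 * k) * conj (c (2 * k)) = e (2 * k) := by
      rw [hd _ (by omega), he₀, mul_right_comm, Complex.mul_conj, Complex.normSq_eq_norm_sq, hc,
        one_pow, Complex.ofReal_one, one_mul]
    simp only [cmvL, Nat.mul_mod_right, if_true, map_mul, cmvRho_mul_of_norm_eq_one (hc _)]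
    linear_combination (conj (α (2 * k)) * y (2 * k)) * hconj
      - (cmvRho (α (2 * k)) * y (2 * k + 1)) * he₁
  · obtain ⟨he₀, he₁⟩ := he (2 * k) (by omega)
    have hodd : (2 * k + 1) % 2 ≠ 0 := by omega
    simp only [cmvL, hodd, if_false, Nat.add_sub_cancel, cmvRho_mul_of_norm_eq_one (hc _)]
    linear_combination (α (2 * k) * y (2 * k + 1)) * (hd (2 * k) (by omega) + he₁)
      - (cmvRho (α (2 * k)) * y (2 * k)) * he₀

lemma cmvM_succ (α x : ℕ → ℂ) (j : ℕ) :
    cmvM α x (j + 1) = cmvL (fun i => α (i + 1)) (fun i => x (i + 1)) j := by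
  obtain ⟨k, rfl | rfl⟩ := Nat.even_or_odd' j
  · have h : (2 * k + 1) % 2 = 1 := by omega
    simp [cmvM, cmvL, h]
  · have h : (2 * k + 1 + 1) % 2 ≠ 1 := by omega
    simp [cmvM, cmvL, h]

lemma mul_cmvM_eq_cmvM_mul (α c d e y : ℕ → ℂ) (hc : ∀ j, ‖c j‖ = 1)
    (hd : ∀ j, j % 2 = 1 → d j = c j * d (j + 1)) (h₀ : e 0 = d 0)
    (he : ∀ j, j % 2 = 1 → e j = d (j + 1) ∧ e (j + 1) = d j) (j : ℕ) :
    d j * cmvM (fun i => c i * α i) y j = cmvM α (fun i => e i * y i) j := by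
  cases j with
  | zero => simp [cmvM, h₀]
  | succ j =>
    rw [cmvM_succ, cmvM_succ]
    exact mul_cmvL_eq_cmvL_mul (fun i => α (i + 1)) (fun i => c (i + 1)) (fun i => d (i + 1))
      (fun i => e (i + 1)) (fun i => y (i + 1)) (fun i => hc _)
      (fun i hi => hd (i + 1) (by omega)) (fun i hi => he (i + 1) (by omega)) j

lemma cmvT_eq_mul (n : ℕ) (l : ℂ) (α : ℕ → ℂ) :
    cmvT n l α = fun j => (if j < n then 1 else l) * α j := by
  funext j
  simp only [cmvT]
  split_ifs <;> simp

def cmvW (n : ℕ) (l : ℂ) : ℕ → ℂ := fun j =>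
  if j % 2 = 0 then cmvUdiag n l (j + 1) else cmvUdiag n l (j - 1)

section

variable {n : ℕ} {l : ℂ}

lemma cmvUdiag_eq_mul_succ (hl : l ≠ 0) {j : ℕ} (hj : j % 2 = 0) :
    cmvUdiag n l j = (if j < n then 1 else l⁻¹) * cmvUdiag n l (j + 1) := by
  simp only [cmvUdiag]
  split_ifs <;> simp_all <;> omega

lemma cmvW_of_even {j : ℕ} (hj : j % 2 = 0) :
    cmvW n l j = cmvUdiag n l (j + 1) ∧ cmvW n l (j + 1) = cmvUdiag n l j := by
  simp [cmvW, hj, Nat.succ_mod_two_eq_one_iff.mpr hj]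

lemma cmvW_eq_mul_succ (hl : l ≠ 0) {j : ℕ} (hj : j % 2 = 1) :
    cmvW n l j = (if j < n then 1 else l⁻¹) * cmvW n l (j + 1) := by
  simp only [cmvW, cmvUdiag]
  split_ifs <;> simp_all <;> omega

lemma cmvDelta_mul_cmvUdiag_zero : cmvDelta n l 0 * cmvUdiag n l 0 = cmvW n l 0 := by
  simp only [cmvW, cmvUdiag, cmvDelta]
  split_ifs <;> simp_all

lemma cmvDelta_mul_cmvUdiag_of_odd {j : ℕ} (hj : j % 2 = 1) :
    cmvDelta n l j * cmvUdiag n l j = cmvW n l (j + 1) ∧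
      cmvDelta n l (j + 1) * cmvUdiag n l (j + 1) = cmvW n l j := by
  simp only [cmvW, cmvUdiag, cmvDelta]
  constructor <;> split_ifs <;> simp_all <;> omega

end

theorem cmv_rankOne_conjugation_general
    (α : ℕ → ℂ) (lam : ℂ) (hlam : ‖lam‖ = 1) (n : ℕ) :
    ∀ x : ℕ → ℂ,
      (fun j => cmvUdiag n lam j *
        cmv (cmvT n lam⁻¹ α) (fun i => (cmvUdiag n lam i)⁻¹ * x i) j)
      = cmv α (fun i => cmvDelta n lam i * x i) := by
  intro x
  funext j
  have hlam₀ : lam ≠ 0 := norm_ne_zero_iff.mp (by simp [hlam])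
  have hc : ∀ i, ‖(if i < n then 1 else lam⁻¹ : ℂ)‖ = 1 := fun i => by
    split_ifs <;> simp [hlam]
  have hU : ∀ i, cmvUdiag n lam i ≠ 0 := fun i => by
    unfold cmvUdiag
    split_ifs <;> simp [hlam₀]
  have hM : (fun i => cmvW n lam i *
      cmvM (cmvT n lam⁻¹ α) (fun i => (cmvUdiag n lam i)⁻¹ * x i) i)
      = cmvM α (fun i => cmvDelta n lam i * x i) := by
    funext i
    rw [cmvT_eq_mul, mul_cmvM_eq_cmvM_mul α _ _ (fun i => cmvDelta n lam i * cmvUdiag n lam i) _ hc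
      (fun _ => cmvW_eq_mul_succ hlam₀) cmvDelta_mul_cmvUdiag_zero
      (fun _ => cmvDelta_mul_cmvUdiag_of_odd)]
    simp only [mul_assoc, mul_inv_cancel_left₀ (hU _)]
  rw [cmv, cmv, ← hM, cmvT_eq_mul]
  exact mul_cmvL_eq_cmvL_mul α _ _ _ _ hc (fun _ => cmvUdiag_eq_mul_succ hlam₀)
    (fun _ => cmvW_of_even) j

/-- Theorem 5.1: `U_n 𝒞(T_{n,λ⁻¹}(α)) U_n⁻¹ = 𝒞(α) Δ_n(λ)`. -/
theorem cmv_rankOne_conjugation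
    (α : ℕ → ℂ) (hα : ∀ j, ‖α j‖ < 1) (lam : ℂ) (hlam : ‖lam‖ = 1) (n : ℕ) :
    ∀ x : ℕ → ℂ,
      (fun j => cmvUdiag n lam j *
        cmv (cmvT n lam⁻¹ α) (fun i => (cmvUdiag n lam i)⁻¹ * x i) j)
      = cmv α (fun i => cmvDelta n lam i * x i) :=
  cmv_rankOne_conjugation_general α lam hlam n
end
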